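/- arXiv:1302.4481 — 5 statements merged into one kernel-verified Lean document; each statement's English description precedes it below -/
import Mathlib

section
/- For integers n ≥ 1, the sum of (1-ξ^{nλ})/(1-ξ^{λ}) raised to the (n+1)-st power over λ = 1,...,n, plus n^{n+1} (the λ=0 term, interpreting the ratio as n there), equals (n+1)·ν_n where ν_n = (n/(n+1))·(n^n - (-1)^n) and ξ = e^{2πi/(n+1)}. -/
open Complex Finset

/-- For `n ≥ 1`, with `ξ = exp(2πi/(n+1))`,
`Σ_{λ=1}^{n} ((1-ξ^{nλ})/(1-ξ^{λ}))^{n+1} + n^{n+1} = (n+1)·ν_n`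
where `ν_n = (n/(n+1))·(n^n - (-1)^n)`. -/
theorem gauss_sum_value (n : ℕ) (hn : 1 ≤ n)
    (ξ : ℂ) (hξ : ξ = Complex.exp (2 * Real.pi * Complex.I / (n + 1))) :
    (∑ l ∈ Finset.Icc 1 n, ((1 - ξ ^ (n * l)) / (1 - ξ ^ l)) ^ (n + 1))
      + (n : ℂ) ^ (n + 1)
    = ((n : ℂ) + 1) * (((n : ℂ) / ((n : ℂ) + 1)) * ((n : ℂ) ^ n - (-1 : ℂ) ^ n)) := by
  have hprim : IsPrimitiveRoot ξ (n + 1) := by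
    rw [hξ]
    have := Complex.isPrimitiveRoot_exp (n + 1) (Nat.succ_ne_zero n)
    convert this using 3
    push_cast
    ring
  have hpow : ξ ^ (n + 1) = 1 := hprim.pow_eq_one
  have hterm : ∀ l ∈ Finset.Icc 1 n,
      ((1 - ξ ^ (n * l)) / (1 - ξ ^ l)) ^ (n + 1) = (-1 : ℂ) ^ (n + 1) := by
    intro l hl
    simp only [Finset.mem_Icc] at hl
    have hne : ξ ^ l ≠ 1 :=
      hprim.pow_ne_one_of_pos_of_lt (by omega) (by omega)
    have hz : ξ ≠ 0 := hprim.ne_zero (Nat.succ_ne_zero n)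
    have hzl : ξ ^ l ≠ 0 := pow_ne_zero l hz
    have hmul : ξ ^ l * ξ ^ (n * l) = 1 := by
      rw [← pow_add]
      have : l + n * l = (n + 1) * l := by ring
      rw [this, pow_mul, hpow, one_pow]
    have hratio : (1 - ξ ^ (n * l)) / (1 - ξ ^ l) = -ξ ^ (n * l) := by
      rw [div_eq_iff (sub_ne_zero.mpr (Ne.symm hne))]
      linear_combination -hmul
    rw [hratio, neg_pow, ← pow_mul]
    have : (n * l) * (n + 1) = (n + 1) * (n * l) := by ring
    rw [this, pow_mul, hpow, one_pow, mul_one]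
  rw [Finset.sum_congr rfl hterm, Finset.sum_const, Nat.card_Icc]
  have hcard : n + 1 - 1 = n := by omega
  rw [hcard]
  have h1 : (n : ℂ) + 1 ≠ 0 := by
    have : (0:ℝ) < (n:ℝ) + 1 := by positivity
    intro h
    have := congrArg Complex.re h
    simp at this
    linarith
  field_simp
  rw [pow_succ (-1 : ℂ) n]
  ring
end

section
/- Let n ≥ 1 and for 0 ≤ s ≤ (n+1)(n-1) let a(s) be the number of (n+1)-tuples (k_0,...,k_n) of integers with 0 ≤ k_i ≤ n-1 and k_0 + ⋯ + k_n = s. Then the sum of a(s) over those s divisible by n+1 equals (n/(n+1))·(n^n - (-1)^n). -/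
open Finset

/-- Number of `m`-tuples over `Fin n` whose sum has residue `r` mod `n+1`. -/
def cc (n m : ℕ) (r : ZMod (n + 1)) : ℕ :=
  Fintype.card {k : Fin m → Fin n // ((∑ i, (k i : ℕ) : ℕ) : ZMod (n + 1)) = r}

lemma cc_zero (n : ℕ) (r : ZMod (n + 1)) :
    cc n 0 r = if r = 0 then 1 else 0 := by
  classical
  rw [cc]
  split_ifs with h
  · subst h
    simp
  · rw [Fintype.card_eq_zero_iff]
    exact ⟨fun k => h (by simpa using k.2.symm)⟩

lemma cc_total (n m : ℕ) : ∑ r : ZMod (n + 1), cc n m r = n ^ m := by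
  classical
  have : ∀ r, cc n m r =
      (univ.filter (fun k : Fin m → Fin n =>
        ((∑ i, (k i : ℕ) : ℕ) : ZMod (n + 1)) = r)).card := by
    intro r
    rw [cc, Fintype.card_subtype]
  simp_rw [this]
  rw [← Finset.card_eq_sum_card_fiberwise (fun k _ => mem_univ _)]
  simp [Fintype.card_fun]

lemma cc_succ (n m : ℕ) (r : ZMod (n + 1)) :
    cc n (m + 1) r = ∑ k0 : Fin n, cc n m (r - ((k0 : ℕ) : ZMod (n + 1))) := by
  classical
  simp only [cc]
  rw [← Fintype.card_sigma]
  apply Fintype.card_congr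
  refine ⟨fun k => ⟨k.1 0, ⟨fun i => k.1 i.succ, ?_⟩⟩,
          fun p => ⟨Fin.cons p.1 p.2.1, ?_⟩, ?_, ?_⟩
  · have h := k.2
    rw [Fin.sum_univ_succ] at h
    push_cast at h ⊢
    linear_combination h
  · have h := p.2.2
    rw [Fin.sum_univ_succ]
    simp only [Fin.cons_zero, Fin.cons_succ]
    push_cast at h ⊢
    linear_combination h
  · intro k
    apply Subtype.ext
    exact Fin.cons_self_tail k.1
  · intro p
    rfl

lemma cc_rec (n m : ℕ) (r : ZMod (n + 1)) :
    cc n (m + 1) r + cc n m (r + 1) = n ^ m := by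
  classical
  have hbij : Function.Bijective (fun k0 : Fin (n + 1) =>
      r - ((k0 : ℕ) : ZMod (n + 1))) := by
    rw [Fintype.bijective_iff_injective_and_card]
    refine ⟨?_, by simp [ZMod.card]⟩
    intro a b hab
    have h1 : ((a : ℕ) : ZMod (n + 1)) = ((b : ℕ) : ZMod (n + 1)) := by
      have := sub_right_injective hab
      simpa using this
    have h2 := congrArg ZMod.val h1
    rw [ZMod.val_cast_of_lt a.isLt, ZMod.val_cast_of_lt b.isLt] at h2
    exact Fin.ext h2
  have hall : ∑ k0 : Fin (n + 1), cc n m (r - ((k0 : ℕ) : ZMod (n + 1)))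
      = ∑ j : ZMod (n + 1), cc n m j :=
    Fintype.sum_bijective _ hbij _ _ (fun k0 => rfl)
  have hsplit : ∑ k0 : Fin (n + 1), cc n m (r - ((k0 : ℕ) : ZMod (n + 1)))
      = (∑ k0 : Fin n, cc n m (r - ((k0 : ℕ) : ZMod (n + 1))))
        + cc n m (r - ((n : ℕ) : ZMod (n + 1))) := by
    rw [Fin.sum_univ_castSucc]
    simp
  have hlast : r - ((n : ℕ) : ZMod (n + 1)) = r + 1 := by
    have : ((n : ℕ) : ZMod (n + 1)) = -1 := by
      have h := ZMod.natCast_self (n + 1)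
      push_cast at h
      linear_combination h
    rw [this]; ring
  rw [cc_succ, ← hlast]
  rw [← hsplit, hall, cc_total]

lemma cc_formula (n : ℕ) : ∀ (m : ℕ) (r : ZMod (n + 1)),
    ((n : ℤ) + 1) * cc n m r
      = (n : ℤ) ^ m - (-1) ^ m
        + (if ((m : ℕ) : ZMod (n + 1)) + r = 0 then ((n : ℤ) + 1) * (-1) ^ m else 0) := by
  intro m
  induction m with
  | zero =>
    intro r
    rw [cc_zero]
    by_cases h : r = 0 <;> simp [h]
  | succ m ih =>
    intro r
    have hrec : ((cc n (m + 1) r : ℤ)) + cc n m (r + 1) = (n : ℤ) ^ m := by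
      exact_mod_cast congrArg (Nat.cast : ℕ → ℤ) (cc_rec n m r)
    have hcond : (((m : ℕ) : ZMod (n + 1)) + (r + 1) = 0)
        ↔ (((m + 1 : ℕ) : ZMod (n + 1)) + r = 0) := by
      constructor <;> intro h <;>
        · push_cast at h ⊢
          linear_combination h
    have ihr := ih (r + 1)
    by_cases hc : ((m + 1 : ℕ) : ZMod (n + 1)) + r = 0
    · rw [if_pos hc]
      rw [if_pos (hcond.mpr hc)] at ihr
      linear_combination ((n : ℤ) + 1) * hrec - ihr
    · rw [if_neg hc]
      rw [if_neg (fun h => hc (hcond.mp h))] at ihr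
      linear_combination ((n : ℤ) + 1) * hrec - ihr

/-- For `n ≥ 1`, letting `a(s)` be the number of `(n+1)`-tuples `(k_0,…,k_n)` with
`0 ≤ k_i ≤ n-1` and `k_0 + ⋯ + k_n = s`, the sum of `a(s)` over `s` in the range
`0 ≤ s ≤ (n+1)(n-1)` that are divisible by `n+1` equals `(n/(n+1))·(n^n - (-1)^n)`. -/
theorem sum_counts_divisible (n : ℕ) (hn : 1 ≤ n)
    (a : ℕ → ℕ)
    (ha : ∀ s, a s = Fintype.card {k : Fin (n + 1) → Fin n // ∑ i, (k i : ℕ) = s}) :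
    ((∑ s ∈ Finset.range ((n + 1) * (n - 1) + 1), if (n + 1) ∣ s then a s else 0 : ℕ) : ℚ)
      = ((n : ℚ) / ((n : ℚ) + 1)) * ((n : ℚ) ^ n - (-1 : ℚ) ^ n) := by
  classical
  set D : Finset (Fin (n + 1) → Fin n) :=
    univ.filter (fun k => (n + 1) ∣ ∑ i, (k i : ℕ)) with hD
  -- every tuple has sum ≤ (n+1)(n-1)
  have hbound : ∀ k : Fin (n + 1) → Fin n, (∑ i, (k i : ℕ)) ≤ (n + 1) * (n - 1) := by
    intro k
    calc ∑ i, (k i : ℕ) ≤ ∑ _i : Fin (n + 1), (n - 1) := by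
          apply Finset.sum_le_sum
          intro i _
          have := (k i).isLt
          omega
      _ = (n + 1) * (n - 1) := by
          rw [Finset.sum_const, card_univ, Fintype.card_fin, smul_eq_mul]
  -- the sum equals the cardinality of D
  have hS : (∑ s ∈ Finset.range ((n + 1) * (n - 1) + 1),
      if (n + 1) ∣ s then a s else 0) = D.card := by
    rw [Finset.card_eq_sum_card_fiberwise
      (f := fun k : Fin (n + 1) → Fin n => ∑ i, (k i : ℕ))
      (t := Finset.range ((n + 1) * (n - 1) + 1))
      (fun k _ => Finset.mem_range.mpr (Nat.lt_succ_of_le (hbound k)))]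
    apply Finset.sum_congr rfl
    intro s _
    rw [hD, Finset.filter_filter]
    split_ifs with hs
    · rw [ha s, Fintype.card_subtype]
      congr 1
      apply Finset.filter_congr
      intro k _
      constructor
      · exact fun h => ⟨h ▸ hs, h⟩
      · exact fun h => h.2
    · rw [Finset.filter_false_of_mem, Finset.card_empty]
      intro k _ h
      exact hs (h.2 ▸ h.1)
  -- D.card equals cc n (n+1) 0
  have hDcc : D.card = cc n (n + 1) 0 := by
    rw [cc, Fintype.card_subtype, hD]
    congr 1
    apply Finset.filter_congr
    intro k _
    exact (ZMod.natCast_eq_zero_iff _ _).symm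
  -- the formula
  have hf := cc_formula n (n + 1) 0
  rw [if_pos (by simp)] at hf
  have hf' : ((n : ℚ) + 1) * (cc n (n + 1) 0 : ℚ)
      = (n : ℚ) ^ (n + 1) - (-1) ^ (n + 1) + ((n : ℚ) + 1) * (-1) ^ (n + 1) := by
    exact_mod_cast congrArg (Int.cast : ℤ → ℚ) hf
  rw [hS, hDcc]
  have hne : (n : ℚ) + 1 ≠ 0 := by positivity
  field_simp
  linear_combination hf'
end

section
/- Let g be a Lie algebra acting on ℂ[a,a*] via derivations Z*(x) in the variables a* (extended ℂ[a]-linearly), let f = Σ_i a_i a*_i, and β: g → ℂ a Lie algebra homomorphism. Then the map x ↦ Z*(x) + M_{Z*(x)f} - β(x), where M_g denotes multiplication by g, is a Lie algebra homomorphism from g to End(ℂ[a,a*]). -/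
open MvPolynomial

namespace ZstarAux

lemma pderiv_pderiv_comm {σ R : Type*} [CommSemiring R] [DecidableEq σ] (i k : σ)
    (p : MvPolynomial σ R) : pderiv i (pderiv k p) = pderiv k (pderiv i p) := by
  induction p using MvPolynomial.induction_on with
  | C a => simp
  | add p q hp hq => simp [hp, hq]
  | mul_X p n ih => simp [pderiv_mul, pderiv_X, ih, Pi.single_apply, apply_ite (pderiv i),
      apply_ite (pderiv k), pderiv_one]; ring

variable (m : ℕ)

abbrev P := MvPolynomial (Fin m ⊕ Fin m) ℂ

variable {m}

noncomputable def D (i : Fin m) : Module.End ℂ (P m) := (pderiv (Sum.inr i)).toLinearMap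
noncomputable def XL (j : Fin m) : Module.End ℂ (P m) := LinearMap.mulLeft ℂ (X (Sum.inr j))
noncomputable def L (p : Fin m × Fin m) : Module.End ℂ (P m) := XL p.2 * D p.1
noncomputable def Q (p q : Fin m × Fin m) : Module.End ℂ (P m) :=
  (XL p.2 * XL q.2) * (D p.1 * D q.1)

@[simp] lemma D_apply (i : Fin m) (x : P m) : D i x = pderiv (Sum.inr i) x := rfl
@[simp] lemma XL_apply (j : Fin m) (x : P m) : XL j x = X (Sum.inr j) * x := rfl

lemma Q_symm (p q : Fin m × Fin m) : Q p q = Q q p := by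
  apply LinearMap.ext; intro x
  simp only [Q, Module.End.mul_apply, D_apply, XL_apply, pderiv_pderiv_comm]
  ring

lemma hLL (p q : Fin m × Fin m) :
    L p * L q = (if q.2 = p.1 then L (q.1, p.2) else 0) + Q p q := by
  apply LinearMap.ext; intro x
  simp only [L, Q, Module.End.mul_apply, LinearMap.add_apply, D_apply, XL_apply, pderiv_mul,
    pderiv_X, mul_add]
  split_ifs with h
  · simp [L, Pi.single_apply, Sum.inr.injEq, h]
  · have : (Sum.inr q.2 : Fin m ⊕ Fin m) ≠ Sum.inr p.1 := by simp [h]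
    simp [Pi.single_apply, this]

end ZstarAux

namespace ZstarAux2
open ZstarAux

lemma sum_swap3 {α : Type*} [AddCommMonoid α] {n : ℕ} (F : Fin n → Fin n → Fin n → α) :
    ∑ i, ∑ j, ∑ k, F i j k = ∑ k, ∑ j, ∑ i, F i j k :=
  calc ∑ i, ∑ j, ∑ k, F i j k = ∑ j, ∑ i, ∑ k, F i j k := Finset.sum_comm
    _ = ∑ j, ∑ k, ∑ i, F i j k := Finset.sum_congr rfl fun _ _ => Finset.sum_comm
    _ = ∑ k, ∑ j, ∑ i, F i j k := Finset.sum_comm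

variable {m : ℕ}

noncomputable def Op (a : Matrix (Fin m) (Fin m) ℂ) : Module.End ℂ (P m) :=
  ∑ p : Fin m × Fin m, a p.1 p.2 • L p

lemma Op_mul_Op (a b : Matrix (Fin m) (Fin m) ℂ) :
    Op a * Op b = (∑ p : Fin m × Fin m, ∑ k, (a p.1 p.2 * b k p.1) • L (k, p.2))
      + ∑ p : Fin m × Fin m, ∑ q : Fin m × Fin m,
          (a p.1 p.2 * b q.1 q.2) • Q p q := by
  rw [Op, Op, Finset.sum_mul_sum]
  have : ∀ (p q : Fin m × Fin m), (a p.1 p.2 • L p) * (b q.1 q.2 • L q)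
      = ((a p.1 p.2 * b q.1 q.2) • (if q.2 = p.1 then L (q.1, p.2) else 0))
        + (a p.1 p.2 * b q.1 q.2) • Q p q := by
    intro p q
    rw [smul_mul_smul_comm, hLL, smul_add]
  simp only [this, Finset.sum_add_distrib]
  congr 1
  refine Finset.sum_congr rfl fun p _ => ?_
  rw [Fintype.sum_prod_type]
  refine Finset.sum_congr rfl fun k _ => ?_
  simp [smul_ite, Finset.sum_ite_eq']

lemma S_symm (a b : Matrix (Fin m) (Fin m) ℂ) :
    (∑ p : Fin m × Fin m, ∑ q : Fin m × Fin m, (a p.1 p.2 * b q.1 q.2) • Q p q)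
    = ∑ p : Fin m × Fin m, ∑ q : Fin m × Fin m, (b p.1 p.2 * a q.1 q.2) • Q p q := by
  rw [Finset.sum_comm]
  refine Finset.sum_congr rfl fun p _ => Finset.sum_congr rfl fun q _ => ?_
  rw [mul_comm, Q_symm]

lemma Op_bracket (a b : Matrix (Fin m) (Fin m) ℂ) :
    Op a * Op b - Op b * Op a = Op (b * a - a * b) := by
  rw [Op_mul_Op, Op_mul_Op, S_symm b a]
  rw [add_sub_add_comm, sub_self, add_zero]
  rw [Op]
  have expand : ∀ (c d : Matrix (Fin m) (Fin m) ℂ),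
      (∑ p : Fin m × Fin m, ∑ k, (c p.1 p.2 * d k p.1) • L (k, p.2))
      = ∑ p : Fin m × Fin m, (d * c) p.1 p.2 • L p := by
    intro c d
    rw [Fintype.sum_prod_type, Fintype.sum_prod_type]
    rw [sum_swap3 (fun i j k => (c i j * d k i) • L (k, j))]
    refine Finset.sum_congr rfl fun k _ => Finset.sum_congr rfl fun j _ => ?_
    rw [Matrix.mul_apply, Finset.sum_smul]
    exact Finset.sum_congr rfl fun i _ => by rw [mul_comm]
  rw [expand a b, expand b a, ← Finset.sum_sub_distrib]
  refine Finset.sum_congr rfl fun p _ => ?_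
  rw [Matrix.sub_apply]
  exact (sub_smul _ _ _).symm

end ZstarAux2

namespace ZstarAux3
open ZstarAux ZstarAux2

variable {m : ℕ}

lemma L_deriv (p : Fin m × Fin m) (u v : P m) : L p (u * v) = L p u * v + u * L p v := by
  simp only [L, Module.End.mul_apply, D_apply, XL_apply, pderiv_mul, mul_add]
  ring

lemma Op_deriv (a : Matrix (Fin m) (Fin m) ℂ) (u v : P m) :
    Op a (u * v) = Op a u * v + u * Op a v := by
  simp only [Op, LinearMap.sum_apply, LinearMap.smul_apply, L_deriv, smul_add,
    Finset.sum_add_distrib, Finset.sum_mul, Finset.mul_sum, smul_mul_assoc, mul_smul_comm]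

lemma mulLeft_comm' (u v : P m) :
    LinearMap.mulLeft ℂ u * LinearMap.mulLeft ℂ v
      = LinearMap.mulLeft ℂ v * LinearMap.mulLeft ℂ u := by
  apply LinearMap.ext; intro p
  simp only [Module.End.mul_apply, LinearMap.mulLeft_apply]
  ring

lemma mulLeft_sub' (u v : P m) :
    LinearMap.mulLeft ℂ (u - v) = LinearMap.mulLeft ℂ u - LinearMap.mulLeft ℂ v := by
  apply LinearMap.ext; intro p
  simp [sub_mul]

lemma smul_one_eq (c : ℂ) :
    (c • 1 : Module.End ℂ (P m)) = LinearMap.mulLeft ℂ (C c) := by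
  apply LinearMap.ext; intro p
  simp [smul_eq_C_mul]

lemma final_alg (A B : Module.End ℂ (P m)) (u v : P m)
    (hA : A * LinearMap.mulLeft ℂ v
      = LinearMap.mulLeft ℂ v * A + LinearMap.mulLeft ℂ (A v))
    (hB : B * LinearMap.mulLeft ℂ u
      = LinearMap.mulLeft ℂ u * B + LinearMap.mulLeft ℂ (B u)) :
    (A + LinearMap.mulLeft ℂ u) * (B + LinearMap.mulLeft ℂ v)
      - (B + LinearMap.mulLeft ℂ v) * (A + LinearMap.mulLeft ℂ u)
    = (A * B - B * A) + (LinearMap.mulLeft ℂ (A v) - LinearMap.mulLeft ℂ (B u)) := by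
  simp only [mul_add, add_mul]
  rw [hA, hB, mulLeft_comm' u v]
  abel

end ZstarAux3

open ZstarAux ZstarAux2 ZstarAux3 in
/-- Let `g` be a Lie algebra acting on `V = ℂ^m` via matrices `x ↦ M x`, with contragredient
action on `ℂ[a,a*]` by the derivations `Z*(x) = -Σ_{i,j} (M x)_{ij} a*ⱼ ∂/∂a*ᵢ` (here the
`inl` variables are the `aᵢ` and the `inr` variables are the `a*ᵢ`). Let `f = Σᵢ aᵢa*ᵢ` and
let `β : g → ℂ` be a Lie algebra character. Then the map
`x ↦ Z*_{f,β}(x) = Z*(x) + (multiplication by Z*(x)f) - β(x)` is a Lie algebra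
homomorphism `g → End(ℂ[a,a*])`. -/
theorem Zstar_f_beta_is_lie_hom (m : ℕ)
    (g : Type*) [LieRing g] [LieAlgebra ℂ g]
    (M : g → Matrix (Fin m) (Fin m) ℂ)
    (hM : ∀ x y : g, M ⁅x, y⁆ = M x * M y - M y * M x)
    (β : g →ₗ[ℂ] ℂ) (hβ : ∀ x y : g, β ⁅x, y⁆ = 0)
    (Zs : g → Module.End ℂ (MvPolynomial (Fin m ⊕ Fin m) ℂ))
    (hZs : ∀ x, Zs x = - ∑ i : Fin m, ∑ j : Fin m, M x i j •
      (LinearMap.mulLeft ℂ (X (Sum.inr j)) *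
        ((pderiv (Sum.inr i)).toLinearMap
          : Module.End ℂ (MvPolynomial (Fin m ⊕ Fin m) ℂ))))
    (f : MvPolynomial (Fin m ⊕ Fin m) ℂ)
    (hf : f = ∑ i : Fin m, X (Sum.inl i) * X (Sum.inr i))
    (T : g → Module.End ℂ (MvPolynomial (Fin m ⊕ Fin m) ℂ))
    (hT : ∀ x, T x = Zs x + LinearMap.mulLeft ℂ (Zs x f)
      - β x • (1 : Module.End ℂ (MvPolynomial (Fin m ⊕ Fin m) ℂ))) :
    ∀ x y : g, T ⁅x, y⁆ = T x * T y - T y * T x := by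
  intro x y
  -- rewrite Zs in terms of Op
  have hZs' : ∀ z, Zs z = -Op (M z) := by
    intro z
    rw [hZs, Op, Fintype.sum_prod_type]
    rfl
  -- the bracket identity for Zs
  have hbr : Zs ⁅x, y⁆ = Zs x * Zs y - Zs y * Zs x := by
    have hOpneg : ∀ c : Matrix (Fin m) (Fin m) ℂ, -Op c = Op (-c) := by
      intro c
      simp only [Op, ← Finset.sum_neg_distrib]
      exact Finset.sum_congr rfl fun p _ => by rw [Matrix.neg_apply]; exact (neg_smul _ _).symm
    rw [hZs', hZs', hZs', hM]
    simp only [neg_mul, mul_neg, neg_neg, Op_bracket, hOpneg, neg_sub]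
  -- Zs z is a derivation
  have hder : ∀ z (u v : MvPolynomial (Fin m ⊕ Fin m) ℂ),
      Zs z (u * v) = Zs z u * v + u * Zs z v := by
    intro z u v
    simp only [hZs', LinearMap.neg_apply, Op_deriv, neg_add, neg_mul, mul_neg]
  -- commutation with multiplication operators
  have hml : ∀ z (u : MvPolynomial (Fin m ⊕ Fin m) ℂ),
      Zs z * LinearMap.mulLeft ℂ u
        = LinearMap.mulLeft ℂ u * Zs z + LinearMap.mulLeft ℂ (Zs z u) := by
    intro z u
    apply LinearMap.ext; intro p
    simp only [Module.End.mul_apply, LinearMap.add_apply, LinearMap.mulLeft_apply, hder]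
    ring
  -- Zs kills constants
  have hC0 : ∀ z (c : ℂ), Zs z (C c) = 0 := by
    intro z c
    simp [hZs, LinearMap.sum_apply, LinearMap.smul_apply, Module.End.mul_apply]
  -- rewrite T
  have hT' : ∀ z, T z = Zs z + LinearMap.mulLeft ℂ (Zs z f - C (β z)) := by
    intro z
    rw [hT, mulLeft_sub', smul_one_eq]
    abel
  have hAgy : Zs x (Zs y f - C (β y)) = Zs x (Zs y f) := by
    rw [map_sub, hC0, sub_zero]
  have hBgx : Zs y (Zs x f - C (β x)) = Zs y (Zs x f) := by
    rw [map_sub, hC0, sub_zero]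
  have key : Zs ⁅x, y⁆ f - C (β ⁅x, y⁆)
      = Zs x (Zs y f - C (β y)) - Zs y (Zs x f - C (β x)) := by
    rw [hβ, map_zero, sub_zero, hbr, hAgy, hBgx]
    simp [LinearMap.sub_apply, Module.End.mul_apply]
  rw [hT' x, hT' y, hT' ⁅x, y⁆,
    final_alg (Zs x) (Zs y) (Zs x f - C (β x)) (Zs y f - C (β y))
      (hml x _) (hml y _),
    key, hbr, mulLeft_sub']
end

section
/- With notation as above, for each x ∈ g the operator Z*_{f,β}(x) = Z*(x) + M_{Z*(x)f} - β(x) on ℂ[a,a*] commutes with multiplication by a_i and with ∂/∂a_i + a*_i for all i. -/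
/-!
`Z*(x)` is a derivation of `ℂ[a,a*]`, namely `-Σ x_{ij} a*ⱼ ∂/∂a*ᵢ`, which kills every `aᵢ` and
commutes with every `∂/∂aᵢ`. For commuting derivations `D, D'` and multiplication operators one has
`[D + M_F, D' + M_G] = M_{DG - D'F}`. Multiplication by `aᵢ` is the case `D' = 0`, `G = aᵢ`, and
`∂/∂aᵢ + a*ᵢ` the case `D' = ∂/∂aᵢ`, `G = a*ᵢ`, where `Z*(x) a*ᵢ = Z*(x) (∂f/∂aᵢ) = ∂/∂aᵢ (Z*(x) f)`.
-/

open MvPolynomial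

namespace Derivation

variable {R A : Type*} [CommSemiring R] [CommRing A] [Algebra R A]

theorem commute_mulLeft_of_apply_eq_zero (D : Derivation R A A) {a : A} (h : D a = 0) :
    Commute (LinearMap.mulLeft R a) (D.toLinearMap : Module.End R A) := by
  ext p
  simp [leibniz, h]

theorem commute_add_mulLeft (D D' : Derivation R A A) {F G : A}
    (hDD' : Commute (D.toLinearMap : Module.End R A) D'.toLinearMap) (h : D G = D' F) :
    Commute (D.toLinearMap + LinearMap.mulLeft R F : Module.End R A)
      (D'.toLinearMap + LinearMap.mulLeft R G) := by
  ext p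
  have hp := LinearMap.congr_fun hDD' p
  simp only [Module.End.mul_apply, LinearMap.add_apply, LinearMap.mulLeft_apply, coeFn_coe,
    map_add, leibniz, smul_eq_mul, h] at hp ⊢
  linear_combination hp

end Derivation

namespace MvPolynomial

variable {R σ : Type*} [CommRing R]

theorem commute_pderiv (i j : σ) :
    Commute ((pderiv i).toLinearMap : Module.End R (MvPolynomial σ R)) (pderiv j).toLinearMap := by
  classical
  rw [commute_iff_lie_eq, ← Derivation.commutator_coe_linear_map]
  have hbracket : ⁅pderiv i, pderiv j⁆ = (0 : Derivation R (MvPolynomial σ R) (MvPolynomial σ R)) :=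
    derivation_ext fun k => by
      rw [Derivation.commutator_apply, pderiv_X, pderiv_X]
      simp only [Pi.single_apply]
      split_ifs <;> simp
  rw [hbracket, Derivation.coe_zero_linearMap]

variable {ι κ : Type*} [Fintype ι]

noncomputable def linearDerivationInr (c : Matrix ι ι R) :
    Derivation R (MvPolynomial (κ ⊕ ι) R) (MvPolynomial (κ ⊕ ι) R) :=
  ∑ i, ∑ j, c i j • (X (Sum.inr j) : MvPolynomial (κ ⊕ ι) R) • pderiv (Sum.inr i)

theorem coe_linearDerivationInr (c : Matrix ι ι R) :
    ((linearDerivationInr c).toLinearMap : Module.End R (MvPolynomial (κ ⊕ ι) R)) =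
      ∑ i, ∑ j, c i j • (LinearMap.mulLeft R (X (Sum.inr j)) * (pderiv (Sum.inr i)).toLinearMap) := by
  refine LinearMap.ext fun p => ?_
  rw [linearDerivationInr, Derivation.coeFn_coe, ← Derivation.coeFnAddMonoidHom_apply]
  simp [map_sum, Finset.sum_apply, Derivation.coeFnAddMonoidHom_apply]

theorem linearDerivationInr_X_inl (c : Matrix ι ι R) (k : κ) :
    linearDerivationInr c (X (Sum.inl k) : MvPolynomial (κ ⊕ ι) R) = 0 := by
  rw [← Derivation.coeFn_coe, coe_linearDerivationInr]
  simp

theorem commute_linearDerivationInr_pderiv_inl (c : Matrix ι ι R) (k : κ) :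
    Commute ((linearDerivationInr c).toLinearMap : Module.End R (MvPolynomial (κ ⊕ ι) R))
      (pderiv (Sum.inl k)).toLinearMap := by
  rw [coe_linearDerivationInr]
  refine Commute.sum_left _ _ _ fun i _ => Commute.sum_left _ _ _ fun j _ => ?_
  have hX : pderiv (Sum.inl k) (X (Sum.inr j) : MvPolynomial (κ ⊕ ι) R) = 0 :=
    pderiv_X_of_ne Sum.inr_ne_inl
  exact ((Derivation.commute_mulLeft_of_apply_eq_zero _ hX).mul_left
    (commute_pderiv _ _)).smul_left _

theorem pderiv_inl_sum_X_inl_mul_X_inr (k : ι) :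
    pderiv (Sum.inl k) (∑ i, X (Sum.inl i) * X (Sum.inr i) : MvPolynomial (ι ⊕ ι) R) =
      X (Sum.inr k) := by
  classical
  simp [pderiv_X, Pi.single_apply]

end MvPolynomial

/-- With `Z*(x) = -Σ_{i,j} (M x)_{ij} a*ⱼ ∂/∂a*ᵢ` a derivation of `ℂ[a,a*]` in the `a*`
(= `inr`) variables, `f = Σᵢ aᵢa*ᵢ`, and `β(x) ∈ ℂ` a scalar, the operator
`Z*_{f,β}(x) = Z*(x) + (multiplication by Z*(x)f) - β(x)` commutes with multiplication by
each `aᵢ` and with each operator `∂/∂aᵢ + a*ᵢ`. -/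
theorem Zstar_f_beta_commutes_with_D (m : ℕ)
    (g : Type*) [LieRing g] [LieAlgebra ℂ g]
    (M : g → Matrix (Fin m) (Fin m) ℂ)
    (β : g →ₗ[ℂ] ℂ)
    (Zs : g → Module.End ℂ (MvPolynomial (Fin m ⊕ Fin m) ℂ))
    (hZs : ∀ x, Zs x = - ∑ i : Fin m, ∑ j : Fin m, M x i j •
      (LinearMap.mulLeft ℂ (X (Sum.inr j)) *
        ((pderiv (Sum.inr i)).toLinearMap
          : Module.End ℂ (MvPolynomial (Fin m ⊕ Fin m) ℂ))))
    (f : MvPolynomial (Fin m ⊕ Fin m) ℂ)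
    (hf : f = ∑ i : Fin m, X (Sum.inl i) * X (Sum.inr i))
    (T : g → Module.End ℂ (MvPolynomial (Fin m ⊕ Fin m) ℂ))
    (hT : ∀ x, T x = Zs x + LinearMap.mulLeft ℂ (Zs x f)
      - β x • (1 : Module.End ℂ (MvPolynomial (Fin m ⊕ Fin m) ℂ))) :
    ∀ (x : g) (i : Fin m),
      T x * LinearMap.mulLeft ℂ (X (Sum.inl i))
        = LinearMap.mulLeft ℂ (X (Sum.inl i)) * T x ∧
      T x * (((pderiv (Sum.inl i)).toLinearMap
            : Module.End ℂ (MvPolynomial (Fin m ⊕ Fin m) ℂ))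
          + LinearMap.mulLeft ℂ (X (Sum.inr i)))
        = (((pderiv (Sum.inl i)).toLinearMap
            : Module.End ℂ (MvPolynomial (Fin m ⊕ Fin m) ℂ))
          + LinearMap.mulLeft ℂ (X (Sum.inr i))) * T x := by
  intro x i
  set D := -linearDerivationInr (κ := Fin m) (M x)
  have hZD : Zs x = D.toLinearMap := by
    rw [hZs, Derivation.coe_neg_linearMap, coe_linearDerivationInr]
  have hDX : D (X (Sum.inl i)) = 0 := by
    rw [Derivation.coe_neg, Pi.neg_apply, linearDerivationInr_X_inl, neg_zero]
  have hDpderiv : Commute D.toLinearMap (pderiv (Sum.inl i)).toLinearMap := by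
    rw [Derivation.coe_neg_linearMap]
    exact (commute_linearDerivationInr_pderiv_inl (M x) i).neg_left
  have hDf : D (X (Sum.inr i)) = pderiv (Sum.inl i) (D f) := by
    rw [← pderiv_inl_sum_X_inl_mul_X_inr i, ← hf]
    simpa only [Module.End.mul_apply, Derivation.coeFn_coe] using
      LinearMap.congr_fun hDpderiv f
  have hβ (E : Module.End ℂ (MvPolynomial (Fin m ⊕ Fin m) ℂ)) : Commute (β x • 1) E :=
    (Commute.one_left E).smul_left _
  rw [hT, hZD, Derivation.coeFn_coe]
  refine ⟨Commute.sub_left ?_ (hβ _), Commute.sub_left ?_ (hβ _)⟩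
  · simpa only [Derivation.coe_zero_linearMap, zero_add] using
      D.commute_add_mulLeft 0 (Commute.zero_right _) (hDX.trans (Derivation.zero_apply _).symm)
  · exact D.commute_add_mulLeft _ hDpderiv hDf
end

section
/- Let 1 ≤ i₁ < i₂ < i₃ < i₄ ≤ N be vertices on a cycle ℤ/Nℤ and let d(a,b) = min over k of |a - b + kN| be the cyclic distance. Then d(i₁,i₃) + d(i₂,i₄) ≥ d(i₁,i₂) + d(i₃,i₄) and d(i₁,i₃) + d(i₂,i₄) ≥ d(i₁,i₄) + d(i₂,i₃), and at least one of these two inequalities is strict. -/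
set_option maxHeartbeats 1000000

lemma emod_of_neg_lt (N x y : ℤ) (hxy : x < y) (h : y - x < N) :
    (x - y) % N = x - y + N := by
  have h1 : (x - y + N) % N = (x - y) % N := by
    simpa using Int.add_mul_emod_self_left (a := x - y) (b := N) (c := 1)
  rw [← h1]
  exact Int.emod_eq_of_lt (by omega) (by omega)

/-- On the cycle `ℤ/Nℤ` with cyclic distance `d(a,b) = min_k |a - b + kN|`, for vertices
`1 ≤ i₁ < i₂ < i₃ < i₄ ≤ N` one has `d(i₁,i₃)+d(i₂,i₄) ≥ d(i₁,i₂)+d(i₃,i₄)` and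
`d(i₁,i₃)+d(i₂,i₄) ≥ d(i₁,i₄)+d(i₂,i₃)`, and at least one inequality is strict. -/
theorem cyclic_distance_plucker (N : ℤ) (hN : 4 ≤ N)
    (d : ℤ → ℤ → ℤ)
    (hd : ∀ a b, d a b = min ((a - b) % N) (N - (a - b) % N))
    (i₁ i₂ i₃ i₄ : ℤ)
    (h1 : 1 ≤ i₁) (h12 : i₁ < i₂) (h23 : i₂ < i₃) (h34 : i₃ < i₄) (h4 : i₄ ≤ N) :
    (d i₁ i₂ + d i₃ i₄ ≤ d i₁ i₃ + d i₂ i₄) ∧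
    (d i₁ i₄ + d i₂ i₃ ≤ d i₁ i₃ + d i₂ i₄) ∧
    ((d i₁ i₂ + d i₃ i₄ < d i₁ i₃ + d i₂ i₄) ∨
      (d i₁ i₄ + d i₂ i₃ < d i₁ i₃ + d i₂ i₄)) := by
  have e12 := emod_of_neg_lt N i₁ i₂ h12 (by omega)
  have e13 := emod_of_neg_lt N i₁ i₃ (by omega) (by omega)
  have e14 := emod_of_neg_lt N i₁ i₄ (by omega) (by omega)
  have e23 := emod_of_neg_lt N i₂ i₃ h23 (by omega)
  have e24 := emod_of_neg_lt N i₂ i₄ (by omega) (by omega)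
  have e34 := emod_of_neg_lt N i₃ i₄ h34 (by omega)
  rw [hd i₁ i₂, hd i₃ i₄, hd i₁ i₃, hd i₂ i₄, hd i₁ i₄, hd i₂ i₃,
    e12, e13, e14, e23, e24, e34]
  omega
end
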